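/- Let s, U ≥ 1, let t ∈ {1, …, 3U}, and let A = {a_1, …, a_s}, B = {b_1, …, b_s}, C be sets of integers in {1, …, U}. Define the 3s²U-dimensional 0/1 vectors M := the concatenation, over all pairs (i, j) ∈ {1, …, s}² in lexicographic order, of the blocks 0^{a_i+b_j} ∘ v_C ∘ 0^{2U−a_i−b_j}, and v := the s²-fold repetition of the block 0^{t−1} ∘ 1 ∘ 0^{3U−t}. Then the inner product of M and v is at least 1 if and only if there exist a ∈ A, b ∈ B, c ∈ C with a + b + c = t. -/

import Mathlib

/-!
Both vectors split into `s²` blocks of length `3U`, and every block of `v` is the unit vector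
`e_t`. So the inner product is the sum over `(i, j)` of the `t`-th entry of the `(i, j)` block of
`M`, which is `v_C` shifted by `a_i + b_j`; that entry is `1` exactly when `t - a_i - b_j ∈ C`.
-/

/-- Characteristic vector (over ℕ) of a set `X ⊆ {1, …, U}`:
position `i ∈ {1, …, U}` carries a `1` iff `i ∈ X`. -/
def charVec (U : ℕ) (X : Finset ℕ) : List ℕ :=
  (List.range U).map (fun i => if i + 1 ∈ X then 1 else 0)

/-- Inner product of two 0/1 vectors given as lists of equal length. -/
def innerProd (u v : List ℕ) : ℕ := (List.zipWith (· * ·) u v).sum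

open List

theorem innerProd_append {u₁ u₂ v₁ v₂ : List ℕ} (h : u₁.length = v₁.length) :
    innerProd (u₁ ++ u₂) (v₁ ++ v₂) = innerProd u₁ v₁ + innerProd u₂ v₂ := by
  rw [innerProd, zipWith_append h, sum_append]; rfl

theorem innerProd_replicate_zero (u : List ℕ) (m : ℕ) : innerProd u (replicate m 0) = 0 := by
  induction u generalizing m with
  | nil => rfl
  | cons x u ih => cases m with
    | zero => rfl
    | succ m =>
      simp only [innerProd, replicate_succ, zipWith_cons_cons, sum_cons, mul_zero, zero_add]
      exact ih m

theorem innerProd_single (u : List ℕ) (k m : ℕ) :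
    innerProd u (replicate k 0 ++ [1] ++ replicate m 0) = u.getD k 0 := by
  rw [append_assoc, singleton_append]
  induction u generalizing k with
  | nil => simp [innerProd]
  | cons x u ih => cases k with
    | zero => simpa [innerProd] using innerProd_replicate_zero u m
    | succ k =>
      simp only [innerProd, replicate_succ, cons_append, zipWith_cons_cons, sum_cons, mul_zero,
        zero_add, getD_cons_succ]
      exact ih k

theorem innerProd_flatten_replicate (L : List (List ℕ)) (w : List ℕ)
    (hL : ∀ u ∈ L, u.length = w.length) :
    innerProd L.flatten (replicate L.length w).flatten = (L.map (innerProd · w)).sum := by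
  induction L with
  | nil => rfl
  | cons u L ih =>
    rw [flatten_cons, length_cons, replicate_succ, flatten_cons, map_cons, sum_cons,
      innerProd_append (hL u mem_cons_self), ih fun v hv => hL v (mem_cons_of_mem u hv)]

theorem innerProd_flatten_finRange {n : ℕ} (f : Fin n → List ℕ) (w : List ℕ)
    (hf : ∀ i, (f i).length = w.length) :
    innerProd ((finRange n).map f).flatten (replicate n w).flatten = ∑ i, innerProd (f i) w := by
  simpa [← ofFn_eq_map, sum_ofFn] using
    innerProd_flatten_replicate ((finRange n).map f) w (by simpa using hf)

theorem innerProd_flatten_flatten_finRange {n m : ℕ} (f : Fin n → Fin m → List ℕ) (w : List ℕ)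
    (hf : ∀ i j, (f i j).length = w.length) :
    innerProd ((finRange n).map fun i => ((finRange m).map (f i)).flatten).flatten
      (replicate (n * m) w).flatten = ∑ i, ∑ j, innerProd (f i j) w := by
  rw [← flatten_replicate_replicate, flatten_flatten, map_replicate,
    innerProd_flatten_finRange _ _ fun i => by simp [Function.comp_def, hf]]
  simp only [innerProd_flatten_finRange _ _ (hf _)]

theorem getD_replicate_append {α : Type*} (d : α) (l : List α) (p k : ℕ) :
    (replicate p d ++ l).getD k d = if k < p then d else l.getD (k - p) d := by
  split_ifs with h
  · rw [getD_append _ _ _ _ (by simpa using h), getD_replicate d h]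
  · rw [getD_append_right _ _ _ _ (by simpa using h), length_replicate]

theorem getD_append_replicate {α : Type*} (d : α) (l : List α) (q k : ℕ) :
    (l ++ replicate q d).getD k d = l.getD k d := by
  by_cases h : k < l.length
  · exact getD_append _ _ _ _ h
  · rw [getD_append_right _ _ _ _ (by omega), getD_eq_getElem?_getD,
      getElem?_getD_replicate_default_eq, getD_eq_default _ _ (by omega)]

theorem charVec_getD (U : ℕ) (X : Finset ℕ) (k : ℕ) :
    (charVec U X).getD k 0 = if k < U ∧ k + 1 ∈ X then 1 else 0 := by
  by_cases h : k < U <;> simp [charVec, getD_eq_getElem?_getD, h]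

theorem shifted_charVec_getD_pos_iff {U : ℕ} {X : Finset ℕ} (hX : X ⊆ Finset.Icc 1 U)
    (p q k : ℕ) :
    0 < (replicate p 0 ++ charVec U X ++ replicate q 0).getD k 0 ↔ ∃ c ∈ X, p + c = k + 1 := by
  rw [getD_append_replicate, getD_replicate_append, charVec_getD]
  constructor
  · intro h
    split_ifs at h with hp hk
    · exact absurd h (lt_irrefl 0)
    · exact ⟨k - p + 1, hk.2, by omega⟩
    · exact absurd h (lt_irrefl 0)
  · rintro ⟨c, hc, hck⟩
    obtain ⟨hc₁, hc₂⟩ := Finset.mem_Icc.mp (hX hc)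
    rw [if_neg (by omega), if_pos ⟨by omega, by rwa [show k - p + 1 = c by omega]⟩]
    exact one_pos

theorem stmt8_general (s U t : ℕ) (ht : t ∈ Finset.Icc 1 (3 * U))
    (a b : Fin s → ℕ)
    (ha_mem : ∀ i, a i ∈ Finset.Icc 1 U) (hb_mem : ∀ j, b j ∈ Finset.Icc 1 U)
    (C : Finset ℕ) (hC : C ⊆ Finset.Icc 1 U) :
    1 ≤ innerProd
        (((List.finRange s).map (fun i =>
          ((List.finRange s).map (fun j =>
            List.replicate (a i + b j) 0 ++ charVec U C
              ++ List.replicate (2 * U - a i - b j) 0)).flatten)).flatten)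
        ((List.replicate (s ^ 2)
          (List.replicate (t - 1) 0 ++ [1] ++ List.replicate (3 * U - t) 0)).flatten)
      ↔ ∃ i : Fin s, ∃ j : Fin s, ∃ c ∈ C, a i + b j + c = t := by
  obtain ⟨ht₁, ht₂⟩ := Finset.mem_Icc.mp ht
  have hblock_len (i j) :
      (replicate (a i + b j) 0 ++ charVec U C ++ replicate (2 * U - a i - b j) 0).length =
        (replicate (t - 1) 0 ++ [1] ++ replicate (3 * U - t) 0).length := by
    have ha := (Finset.mem_Icc.mp (ha_mem i)).2
    have hb := (Finset.mem_Icc.mp (hb_mem j)).2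
    simp only [length_append, length_replicate, charVec, length_map, length_range,
      length_singleton]
    omega
  rw [sq, innerProd_flatten_flatten_finRange _ _ hblock_len]
  simp only [innerProd_single, Order.one_le_iff_pos, Finset.sum_pos_iff, Finset.mem_univ,
    true_and, shifted_charVec_getD_pos_iff hC, Nat.sub_add_cancel ht₁]

/-- with `A = {a_1,…,a_s}`, `B = {b_1,…,b_s}`, `C` sets of integers
in `{1, …, U}` and a target `t ∈ {1, …, 3U}`, the inner product of
`M = ⋃_{(i,j) lex} 0^{a_i + b_j} v_C 0^{2U - a_i - b_j}` and
`v = (0^{t-1} 1 0^{3U - t})^{s²}` is at least 1 iff there are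
`a ∈ A, b ∈ B, c ∈ C` with `a + b + c = t`. -/
theorem stmt8 (s U t : ℕ) (hs : 1 ≤ s) (hU : 1 ≤ U) (ht : t ∈ Finset.Icc 1 (3 * U))
    (a b : Fin s → ℕ) (ha_inj : Function.Injective a) (hb_inj : Function.Injective b)
    (ha_mem : ∀ i, a i ∈ Finset.Icc 1 U) (hb_mem : ∀ j, b j ∈ Finset.Icc 1 U)
    (C : Finset ℕ) (hC : C ⊆ Finset.Icc 1 U) :
    1 ≤ innerProd
        (((List.finRange s).map (fun i =>
          ((List.finRange s).map (fun j =>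
            List.replicate (a i + b j) 0 ++ charVec U C
              ++ List.replicate (2 * U - a i - b j) 0)).flatten)).flatten)
        ((List.replicate (s ^ 2)
          (List.replicate (t - 1) 0 ++ [1] ++ List.replicate (3 * U - t) 0)).flatten)
      ↔ ∃ i : Fin s, ∃ j : Fin s, ∃ c ∈ C, a i + b j + c = t :=
  stmt8_general s U t ht a b ha_mem hb_mem C hC
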